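/- arXiv:1704.01562 — 3 statements merged into one kernel-verified Lean document; each statement's English description precedes it below -/
import Mathlib

section
/- Fix an integer m ≥ 1. There exists exactly one function f from words over {0,1,…,m} to R satisfying: (L0) f(∅) = 1; (L1) f(0v) = (t^{#{i : v_i < m}} + a)·f(v) for every word v; (L2) f(kv) = t^{#{i : v_i < k}}·f(v(k-1)) for every word v and every k with 1 ≤ k ≤ m-1; (L3) f(mv) = f(v(m-1)) + q·f(vm) for every word v. -/
noncomputable section

/-- The polynomial ring `ℤ[q,t,a]`. -/
abbrev P : Type := MvPolynomial (Fin 3) ℤ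

/-- The variable `q`. -/
def q : P := MvPolynomial.X 0
/-- The variable `t`. -/
def t : P := MvPolynomial.X 1
/-- The variable `a`. -/
def a : P := MvPolynomial.X 2

/-- `R`, the localization of `ℤ[q,t,a]` at the element `1 - q`. -/
abbrev R : Type := Localization.Away (1 - q)

/-- The localization map `ℤ[q,t,a] → R`. -/
def φ : P →+* R := algebraMap P R

/-- `#{i : v_i < c}`, the number of entries of `v` strictly less than `c`. -/
def cntlt {m : ℕ} (c : ℕ) (v : List (Fin (m + 1))) : ℕ :=
  v.countP fun y => decide ((y : ℕ) < c)

/-- The relations (L0)–(L3) for a function `f` from words over `{0,1,…,m}` to `R`. -/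
def Lrel (m : ℕ) (f : List (Fin (m + 1)) → R) : Prop :=
  -- (L0)
  f [] = 1 ∧
  -- (L1)
  (∀ v : List (Fin (m + 1)),
    f ((0 : Fin (m + 1)) :: v) = (φ t ^ cntlt m v + φ a) * f v) ∧
  -- (L2)
  (∀ (v : List (Fin (m + 1))) (k : ℕ) (_hk1 : 1 ≤ k) (_hk2 : k ≤ m - 1),
    f ((⟨k, by omega⟩ : Fin (m + 1)) :: v) =
      φ t ^ cntlt k v * f (v ++ [(⟨k - 1, by omega⟩ : Fin (m + 1))])) ∧
  -- (L3)
  (∀ v : List (Fin (m + 1)),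
    f (Fin.last m :: v) =
      f (v ++ [(⟨m - 1, by omega⟩ : Fin (m + 1))]) + φ q * f (v ++ [Fin.last m]))

-- aux
def uu : R := IsLocalization.Away.invSelf (1 - q)
lemma uu_spec : uu * (1 - φ q) = 1 := by
  have := IsLocalization.Away.mul_invSelf (S := R) (1 - q)
  rw [map_sub, map_one] at this
  rw [mul_comm]; exact this

def sumv {m : ℕ} (v : List (Fin (m + 1))) : ℕ := (v.map Fin.val).sum

def rho {m : ℕ} : List (Fin (m + 1)) → ℕ
  | [] => 0
  | x :: v => if (x : ℕ) = m then rho v + 1 else 0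

lemma sumv_append {m : ℕ} (v : List (Fin (m+1))) (y : Fin (m+1)) :
    sumv (v ++ [y]) = sumv v + y := by simp [sumv]

lemma rho_append {m : ℕ} (v : List (Fin (m+1))) (y : Fin (m+1))
    (h : ¬ ∀ z ∈ v, (z : ℕ) = m) : rho (v ++ [y]) = rho v := by
  induction v with
  | nil => simp at h
  | cons x v ih =>
    by_cases hx : (x : ℕ) = m
    · have : ¬ ∀ z ∈ v, (z : ℕ) = m := by
        intro hall; exact h (by intro z hz; rcases List.mem_cons.1 hz with rfl | hz; exact hx; exact hall z hz)
      simp [rho, hx, ih this]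
    · simp [rho, hx]

lemma all_m_append {m : ℕ} (v : List (Fin (m+1))) (h : ∀ z ∈ v, (z : ℕ) = m) :
    v ++ [Fin.last m] = Fin.last m :: v := by
  have hv : v = List.replicate v.length (Fin.last m) := by
    apply List.eq_replicate_of_mem
    intro z hz; exact Fin.ext (by simpa [Fin.last] using h z hz)
  rw [hv]
  rw [← List.replicate_succ, ← List.replicate_succ']

def fA (m : ℕ) (hm : 1 ≤ m) : List (Fin (m + 1)) → R
  | [] => 1
  | x :: v =>
    if h0 : (x : ℕ) = 0 then (φ t ^ cntlt m v + φ a) * fA m hm v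
    else if hxm : (x : ℕ) = m then
      if hall : ∀ z ∈ v, (z : ℕ) = m then
        uu * fA m hm (v ++ [(⟨m - 1, by omega⟩ : Fin (m+1))])
      else
        fA m hm (v ++ [(⟨m - 1, by omega⟩ : Fin (m+1))]) +
          φ q * fA m hm (v ++ [Fin.last m])
    else
      φ t ^ cntlt (x : ℕ) v * fA m hm (v ++ [(⟨(x : ℕ) - 1, by omega⟩ : Fin (m+1))])
  termination_by v => (sumv v, v.length, rho v)
  decreasing_by
  · -- L1 branch : v < x :: v ; sum equal, length decreases
    have : sumv (x :: v) = sumv v := by simp [sumv, h0]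
    refine Prod.Lex.right' _ (by omega) ?_
    refine Prod.Lex.left _ _ (by simp)
  · -- all-m branch : sum decreases
    refine Prod.Lex.left _ _ ?_
    have := sumv_append v (⟨m-1, by omega⟩ : Fin (m+1))
    simp [sumv] at this ⊢
    omega
  · -- m branch, first recursive call : sum decreases
    refine Prod.Lex.left _ _ ?_
    have := sumv_append v (⟨m-1, by omega⟩ : Fin (m+1))
    simp [sumv] at this ⊢
    omega
  · -- m branch, second call : sum eq, length eq, rho decreases
    have h1 : sumv (v ++ [Fin.last m]) = sumv (x :: v) := by
      rw [sumv_append]; simp [sumv, Fin.last, hxm]; omega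
    have h2 : (v ++ [Fin.last m]).length = (x :: v).length := by simp
    refine Prod.Lex.right' _ (by omega) ?_
    refine Prod.Lex.right' _ (by omega) ?_
    rw [rho_append v _ hall]
    simp [rho, hxm]
  · -- middle branch : sum decreases
    refine Prod.Lex.left _ _ ?_
    have := sumv_append v (⟨(x:ℕ)-1, by omega⟩ : Fin (m+1))
    simp [sumv] at this ⊢
    omega

lemma Lrel_fA (m : ℕ) (hm : 1 ≤ m) : Lrel m (fA m hm) := by
  refine ⟨?_, ?_, ?_, ?_⟩
  · rw [fA]
  · intro v
    rw [fA, dif_pos (by simp : ((0 : Fin (m+1)) : ℕ) = 0)]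
  · intro v k hk1 hk2
    rw [fA, dif_neg (by simp; omega), dif_neg (by simp; omega)]
  · intro v
    have h0 : ¬ ((Fin.last m : Fin (m+1)) : ℕ) = 0 := by simp [Fin.last]; omega
    have hM : ((Fin.last m : Fin (m+1)) : ℕ) = m := by simp [Fin.last]
    rw [fA, dif_neg h0, dif_pos hM]
    by_cases hall : ∀ z ∈ v, (z : ℕ) = m
    · rw [dif_pos hall, all_m_append v hall,
        fA, dif_neg h0, dif_pos hM, dif_pos hall]
      set X := fA m hm (v ++ [(⟨m - 1, by omega⟩ : Fin (m+1))]) with hX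
      linear_combination X * uu_spec
    · rw [dif_neg hall]

theorem uniq (m : ℕ) (hm : 1 ≤ m) (g : List (Fin (m+1)) → R) (hg : Lrel m g) :
    ∀ v, g v = fA m hm v
  | [] => by rw [fA]; exact hg.1
  | x :: v => by
    by_cases h0 : (x : ℕ) = 0
    · have hx : x = 0 := Fin.ext (by simpa using h0)
      rw [hx, hg.2.1 v, fA, dif_pos (by simp : ((0 : Fin (m+1)) : ℕ) = 0),
        uniq m hm g hg v]
    · by_cases hxm : (x : ℕ) = m
      · have hx : x = Fin.last m := Fin.ext (by simpa [Fin.last] using hxm)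
        have h0' : ¬ ((Fin.last m : Fin (m+1)) : ℕ) = 0 := by simp [Fin.last]; omega
        have hM : ((Fin.last m : Fin (m+1)) : ℕ) = m := by simp [Fin.last]
        by_cases hall : ∀ z ∈ v, (z : ℕ) = m
        · have h := hg.2.2.2 v
          rw [all_m_append v hall] at h
          have heq : g (Fin.last m :: v) =
              uu * g (v ++ [(⟨m - 1, by omega⟩ : Fin (m+1))]) := by
            linear_combination uu * h - g (Fin.last m :: v) * uu_spec
          rw [hx, heq, uniq m hm g hg (v ++ [(⟨m - 1, by omega⟩ : Fin (m+1))]),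
            fA, dif_neg h0', dif_pos hM, dif_pos hall]
        · rw [hx, hg.2.2.2 v, fA, dif_neg h0', dif_pos hM, dif_neg hall,
            uniq m hm g hg (v ++ [(⟨m - 1, by omega⟩ : Fin (m+1))]),
            uniq m hm g hg (v ++ [Fin.last m])]
      · have hk2 : (x : ℕ) ≤ m - 1 := by have := x.isLt; omega
        have h := hg.2.2.1 v (x : ℕ) (by omega) hk2
        have hx : (⟨(x : ℕ), by omega⟩ : Fin (m+1)) = x := Fin.ext rfl
        rw [hx] at h
        rw [h, fA, dif_neg h0, dif_neg hxm,
          uniq m hm g hg (v ++ [(⟨(x : ℕ) - 1, by omega⟩ : Fin (m+1))])]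
  termination_by v => (sumv v, v.length, rho v)
  decreasing_by
  · have : sumv (x :: v) = sumv v := by simp [sumv, h0]
    refine Prod.Lex.right' _ (by omega) ?_
    exact Prod.Lex.left _ _ (by simp)
  · refine Prod.Lex.left _ _ ?_
    have := sumv_append v (⟨m-1, by omega⟩ : Fin (m+1))
    simp [sumv, hxm] at this ⊢
    omega
  · refine Prod.Lex.left _ _ ?_
    have := sumv_append v (⟨m-1, by omega⟩ : Fin (m+1))
    simp [sumv, hxm] at this ⊢
    omega
  · have h1 : sumv (v ++ [Fin.last m]) = sumv (x :: v) := by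
      rw [sumv_append]; simp [sumv, Fin.last, hxm]; omega
    have h2 : (v ++ [Fin.last m]).length = (x :: v).length := by simp
    refine Prod.Lex.right' _ (by omega) ?_
    refine Prod.Lex.right' _ (by omega) ?_
    rw [rho_append v _ hall]
    simp [rho, hxm]
  · refine Prod.Lex.left _ _ ?_
    have := sumv_append v (⟨(x:ℕ)-1, by omega⟩ : Fin (m+1))
    simp [sumv] at this ⊢
    omega


/-- There is exactly one function `f` from words over `{0,1,…,m}` to `R`
satisfying (L0)–(L3). -/
theorem stmt2 (m : ℕ) (hm : 1 ≤ m) :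
    ∃! f : List (Fin (m + 1)) → R, Lrel m f := by
  exact ⟨fA m hm, Lrel_fA m hm, fun g hg => funext (uniq m hm g hg)⟩
end
end

section
/- Fix an integer m ≥ 1 and let f be the unique R-valued function on words over {0,1,…,m} satisfying (L0)–(L3). Then for every n ≥ 1, (1-q)·f(m^n) = f(m^{n-1}(m-1)), where m^n denotes the word consisting of n copies of m and m^{n-1}(m-1) denotes n-1 copies of m followed by a single m-1. -/
noncomputable section

/-- For the unique `R`-valued function `f` satisfying (L0)–(L3):
`(1-q)·f(m^n) = f(m^{n-1}(m-1))` for every `n ≥ 1`. -/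
theorem stmt3 (m : ℕ) (hm : 1 ≤ m) (f : List (Fin (m + 1)) → R) (hf : Lrel m f)
    (n : ℕ) (hn : 1 ≤ n) :
    φ (1 - q) * f (List.replicate n (Fin.last m)) =
      f (List.replicate (n - 1) (Fin.last m) ++
        [(⟨m - 1, by omega⟩ : Fin (m + 1))]) := by
  obtain ⟨-, -, -, hL3⟩ := hf
  have h3 := hL3 (List.replicate (n - 1) (Fin.last m))
  have h1 : Fin.last m :: List.replicate (n - 1) (Fin.last m)
      = List.replicate n (Fin.last m) := by
    rw [← List.replicate_succ]; congr 1; omega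
  have h2 : List.replicate (n - 1) (Fin.last m) ++ [Fin.last m]
      = List.replicate n (Fin.last m) := by
    rw [← List.replicate_succ']; congr 1; omega
  rw [h1, h2] at h3
  rw [map_sub, map_one]
  linear_combination h3
end
end

section
/- In the braid group Br_n (n ≥ 2), for every 1 ≤ i ≤ n-1 and every m ≥ 1, one has X_{[1,n-i]}·sh(FT_{n-1})·FT_n^{m-1}·Y_{[1,n-i]} = X_{[n-i,n]}^{-1}·Y_{[n-i,n]}^{-1}·FT_n^m, where sh : Br_{n-1} → Br_n is the homomorphism sending σ_j to σ_{j+1}. -/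
/-- The braid relations on `g` generators `σ_1,…,σ_g` (0-indexed here):
`σ_iσ_{i+1}σ_i = σ_{i+1}σ_iσ_{i+1}` and `σ_iσ_j = σ_jσ_i` for `|i-j| ≥ 2`. -/
def braidRelsSet (g : ℕ) : Set (FreeGroup (Fin g)) :=
  {r | (∃ i j : Fin g, (i : ℕ) + 1 = (j : ℕ) ∧
          r = FreeGroup.of i * FreeGroup.of j * FreeGroup.of i *
              (FreeGroup.of j * FreeGroup.of i * FreeGroup.of j)⁻¹) ∨
       (∃ i j : Fin g, (i : ℕ) + 2 ≤ (j : ℕ) ∧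
          r = FreeGroup.of i * FreeGroup.of j *
              (FreeGroup.of j * FreeGroup.of i)⁻¹)}

/-- The braid group `Br_n` on `n` strands, presented by generators
`σ_1,…,σ_{n-1}` and the braid relations. -/
def BraidGroup (n : ℕ) : Type := PresentedGroup (braidRelsSet (n - 1))

instance (n : ℕ) : Group (BraidGroup n) :=
  inferInstanceAs (Group (PresentedGroup (braidRelsSet (n - 1))))

/-- The generator `σ_i` of `Br_n`, for `1 ≤ i ≤ n-1` (junk value `1` otherwise). -/
def σ (n i : ℕ) : BraidGroup n :=
  if h : i - 1 < n - 1 then PresentedGroup.of (⟨i - 1, h⟩ : Fin (n - 1)) else 1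

/-- `X_{[i,j]} = σ_{j-1}σ_{j-2}⋯σ_i` in `Br_n` (empty product equals 1). -/
def Xb (n i j : ℕ) : BraidGroup n :=
  ((List.range (j - i)).map fun k => σ n (j - 1 - k)).prod

/-- `Y_{[i,j]} = σ_iσ_{i+1}⋯σ_{j-1}` in `Br_n` (empty product equals 1). -/
def Yb (n i j : ℕ) : BraidGroup n :=
  ((List.range (j - i)).map fun k => σ n (i + k)).prod

/-- The half twist `HT_n = X_{[1,2]}X_{[1,3]}⋯X_{[1,n]}` in `Br_n`. -/
def HTb (n : ℕ) : BraidGroup n :=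
  ((List.range (n - 1)).map fun k => Xb n 1 (k + 2)).prod

/-- The full twist `FT_n = (σ_{n-1}⋯σ_2σ_1)^n` in `Br_n`. -/
def FTb (n : ℕ) : BraidGroup n := Xb n 1 n ^ n

/-- The Jucys–Murphy braid `J_k = X_{[1,k]}Y_{[1,k]}` in `Br_n`. -/
def Jb (n k : ℕ) : BraidGroup n := Xb n 1 k * Yb n 1 k

/-!
Put `δ = X_{[1,n]} = σ_{n-1}⋯σ_1` and `Z = X_{[2,n]} = sh(X_{[1,n-1]})`. The braid relation
`σ_iσ_{i+1}σ_i = σ_{i+1}σ_iσ_{i+1}` gives `σ_i δ = δ σ_{i+1}`, i.e. conjugation by `δ` shifts the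
generators. Since `δ = Z σ_1`, this yields `δ^m = Z^m σ_1⋯σ_m` for `m < n`, hence
`FT_n = δ^n = sh(FT_{n-1}) · Y_{[1,n]} · X_{[1,n]}`. The same shift gives `σ_{n-1} δ² = δ² σ_1`,
so `FT_n` commutes with `σ_1` and with `δ`, hence with every `σ_i`: `FT_n` is central.
Splitting `Y_{[1,n]} = Y_{[1,k]} Y_{[k,n]}` and `X_{[1,n]} = X_{[k,n]} X_{[1,k]}` at `k = n - i`
and rotating the product (allowed since `FT_n` is central) gives the identity.
-/

namespace BraidGroup

open PresentedGroup

lemma of_braid {g : ℕ} (i j : Fin g) (hij : (i : ℕ) + 1 = j) :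
    (of i * of j * of i : PresentedGroup (braidRelsSet g)) = of j * of i * of j :=
  mul_inv_eq_one.mp (one_of_mem (Or.inl ⟨i, j, hij, rfl⟩))

lemma of_commute {g : ℕ} (i j : Fin g) (hij : (i : ℕ) + 2 ≤ j) :
    (of i * of j : PresentedGroup (braidRelsSet g)) = of j * of i :=
  mul_inv_eq_one.mp (one_of_mem (Or.inr ⟨i, j, hij, rfl⟩))

lemma σ_succ_val {n : ℕ} (j : Fin (n - 1)) : σ n (j + 1) = of j := by
  simp [σ, j.isLt]; rfl

lemma σ_braid {n i : ℕ} (hi : 1 ≤ i) (hin : i + 2 ≤ n) :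
    σ n i * σ n (i + 1) * σ n i = σ n (i + 1) * σ n i * σ n (i + 1) := by
  obtain ⟨j, rfl⟩ : ∃ j, i = j + 1 := ⟨i - 1, by omega⟩
  rw [σ_succ_val ⟨j, by omega⟩, σ_succ_val ⟨j + 1, by omega⟩]
  exact of_braid _ _ rfl

lemma commute_σ_σ {n i j : ℕ} (hi : 1 ≤ i) (hij : i + 2 ≤ j) : Commute (σ n i) (σ n j) := by
  by_cases hjn : n ≤ j
  · simp [σ, show ¬ j - 1 < n - 1 by omega]
  obtain ⟨i', rfl⟩ : ∃ i', i = i' + 1 := ⟨i - 1, by omega⟩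
  obtain ⟨j', rfl⟩ : ∃ j', j = j' + 1 := ⟨j - 1, by omega⟩
  rw [σ_succ_val ⟨i', by omega⟩, σ_succ_val ⟨j', by omega⟩]
  exact of_commute _ _ (by simp; omega)

section Intervals

variable {n a b c : ℕ}

lemma Xb_mul_Xb (hab : a ≤ b) (hbc : b ≤ c) : Xb n b c * Xb n a b = Xb n a c := by
  rw [Xb, Xb, Xb, show c - a = (c - b) + (b - a) by omega, List.range_add, List.map_append,
    List.prod_append, List.map_map]
  congr 3
  funext k
  simp only [Function.comp_apply]
  congr 1
  omega

lemma Yb_mul_Yb (hab : a ≤ b) (hbc : b ≤ c) : Yb n a b * Yb n b c = Yb n a c := by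
  rw [Yb, Yb, Yb, show c - a = (b - a) + (c - b) by omega, List.range_add, List.map_append,
    List.prod_append, List.map_map]
  congr 3
  funext k
  simp only [Function.comp_apply]
  congr 1
  omega

lemma Xb_succ_self : Xb n a (a + 1) = σ n a := by simp [Xb]

lemma Yb_succ_self : Yb n a (a + 1) = σ n a := by simp [Yb]

lemma Xb_succ (hab : a ≤ b) : Xb n a (b + 1) = σ n b * Xb n a b := by
  rw [← Xb_mul_Xb hab b.le_succ, Xb_succ_self]

lemma commute_Xb {g : BraidGroup n} (h : ∀ k, a ≤ k → k < b → Commute g (σ n k)) :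
    Commute g (Xb n a b) :=
  Commute.list_prod_right _ _ <| by
    simp only [List.mem_map, List.mem_range]
    rintro _ ⟨k, hk, rfl⟩
    exact h _ (by omega) (by omega)

lemma map_Xb {p q : ℕ} {F : Type*} [FunLike F (BraidGroup p) (BraidGroup q)]
    [MonoidHomClass F (BraidGroup p) (BraidGroup q)] (f : F) (s : ℕ)
    (hf : ∀ k, a ≤ k → k < b → f (σ p k) = σ q (k + s)) :
    f (Xb p a b) = Xb q (a + s) (b + s) := by
  rw [Xb, Xb, map_list_prod, List.map_map, Nat.add_sub_add_right]
  refine congrArg List.prod (List.map_congr_left fun k hk => ?_)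
  rw [List.mem_range] at hk
  simp only [Function.comp_apply]
  rw [hf _ (by omega) (by omega)]
  congr 1
  omega

lemma map_Yb {p q : ℕ} {F : Type*} [FunLike F (BraidGroup p) (BraidGroup q)]
    [MonoidHomClass F (BraidGroup p) (BraidGroup q)] (f : F) (s : ℕ)
    (hf : ∀ k, a ≤ k → k < b → f (σ p k) = σ q (k + s)) :
    f (Yb p a b) = Yb q (a + s) (b + s) := by
  rw [Yb, Yb, map_list_prod, List.map_map, Nat.add_sub_add_right]
  refine congrArg List.prod (List.map_congr_left fun k hk => ?_)
  rw [List.mem_range] at hk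
  simp only [Function.comp_apply]
  rw [hf _ (by omega) (by omega)]
  congr 1
  omega

end Intervals

section FullTwist

variable {n a b i : ℕ}

lemma σ_mul_Xb (ha : 1 ≤ a) (hai : a ≤ i) (hib : i + 2 ≤ b) (hbn : b ≤ n) :
    σ n i * Xb n a b = Xb n a b * σ n (i + 1) := by
  have hsplit : Xb n a b = Xb n (i + 2) b * (σ n (i + 1) * (σ n i * Xb n a i)) := by
    rw [← Xb_succ hai, ← Xb_succ (b := i + 1) (by omega), Xb_mul_Xb (by omega) hib]
  have hhigh : Commute (σ n i) (Xb n (i + 2) b) :=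
    commute_Xb fun k hk _ => commute_σ_σ (by omega) hk
  have hlow : Commute (σ n (i + 1)) (Xb n a i) :=
    commute_Xb fun k hk hki => (commute_σ_σ (by omega) (by omega)).symm
  rw [hsplit]
  calc σ n i * (Xb n (i + 2) b * (σ n (i + 1) * (σ n i * Xb n a i)))
      = Xb n (i + 2) b * (σ n i * σ n (i + 1) * σ n i) * Xb n a i := by
        rw [← mul_assoc, hhigh.eq]; simp only [mul_assoc]
    _ = Xb n (i + 2) b * (σ n (i + 1) * σ n i * σ n (i + 1)) * Xb n a i := by
        rw [σ_braid (by omega) (by omega)]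
    _ = Xb n (i + 2) b * (σ n (i + 1) * (σ n i * Xb n a i)) * σ n (i + 1) := by
        simp only [mul_assoc, hlow.eq]

lemma conj_inv_Xb_σ (hi : 1 ≤ i) (hin : i + 2 ≤ n) :
    MulAut.conj (Xb n 1 n)⁻¹ (σ n i) = σ n (i + 1) := by
  rw [MulAut.conj_apply, inv_inv, mul_assoc, σ_mul_Xb le_rfl hi hin le_rfl, inv_mul_cancel_left]

lemma Yb_mul_Xb_shift (hb : b + 1 ≤ n) :
    Yb n 1 b * Xb n 1 n = Xb n 1 n * Yb n 2 (b + 1) := by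
  have h := map_Yb (a := 1) (b := b) (MulAut.conj (Xb n 1 n)⁻¹) 1 fun k hk hkb =>
    conj_inv_Xb_σ (n := n) hk (by omega)
  rw [MulAut.conj_apply, inv_inv] at h
  rw [← h]
  group

lemma Xb_mul_Xb_shift (hn : 1 ≤ n) :
    Xb n 1 (n - 1) * Xb n 1 n = Xb n 1 n * Xb n 2 n := by
  have h := map_Xb (a := 1) (b := n - 1) (MulAut.conj (Xb n 1 n)⁻¹) 1 fun k hk hkb =>
    conj_inv_Xb_σ (n := n) hk (by omega)
  rw [MulAut.conj_apply, inv_inv, Nat.sub_add_cancel hn] at h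
  rw [← h]
  group

lemma Xb_mul_σ_one (hb : 2 ≤ b) : Xb n 2 b * σ n 1 = Xb n 1 b := by
  rw [← Xb_mul_Xb one_le_two hb, show Xb n 1 2 = σ n 1 from Xb_succ_self]

lemma σ_one_mul_Yb (hb : 2 ≤ b) : σ n 1 * Yb n 2 b = Yb n 1 b := by
  rw [← Yb_mul_Yb one_le_two hb, show Yb n 1 2 = σ n 1 from Yb_succ_self]

lemma Xb_one_pow {m : ℕ} (hm : m + 1 ≤ n) :
    Xb n 1 n ^ m = Xb n 2 n ^ m * Yb n 1 (m + 1) := by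
  induction m with
  | zero => simp [Yb]
  | succ m ih =>
    rw [pow_succ, ih (by omega), mul_assoc, Yb_mul_Xb_shift (by omega),
      ← Xb_mul_σ_one (by omega), ← σ_one_mul_Yb (b := m + 2) (by omega)]
    group

lemma FTb_eq_Xb_two_pow_mul (hn : 1 ≤ n) : FTb n = Xb n 2 n ^ (n - 1) * Yb n 1 n * Xb n 1 n := by
  rw [FTb, ← Nat.sub_add_cancel hn, pow_succ, Xb_one_pow le_rfl, Nat.sub_add_cancel hn]

lemma σ_mul_Xb_pow {t : ℕ} (hi : 1 ≤ i) (hit : i + t + 1 ≤ n) :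
    σ n i * Xb n 1 n ^ t = Xb n 1 n ^ t * σ n (i + t) := by
  induction t with
  | zero => simp
  | succ t ih =>
    rw [pow_succ, ← mul_assoc, ih (by omega), mul_assoc,
      σ_mul_Xb le_rfl (by omega) (by omega) le_rfl, ← mul_assoc, ← add_assoc]

lemma σ_mul_Xb_sq (hn : 2 ≤ n) :
    σ n (n - 1) * Xb n 1 n ^ 2 = Xb n 1 n ^ 2 * σ n 1 := by
  have htop : σ n (n - 1) * Xb n 1 (n - 1) = Xb n 1 n := by
    rw [← Xb_succ (by omega), Nat.sub_add_cancel (by omega)]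
  calc σ n (n - 1) * Xb n 1 n ^ 2
      = σ n (n - 1) * (Xb n 1 n * Xb n 2 n) * σ n 1 := by
        rw [sq]; nth_rw 2 [← Xb_mul_σ_one hn]; simp only [mul_assoc]
    _ = Xb n 1 n ^ 2 * σ n 1 := by
        rw [← Xb_mul_Xb_shift (by omega), ← mul_assoc, htop, sq]

lemma commute_FTb_σ (hi : 1 ≤ i) (hin : i < n) : Commute (FTb n) (σ n i) := by
  induction i, hi using Nat.le_induction with
  | base =>
    have hFTb : FTb n = Xb n 1 n ^ (n - 2) * Xb n 1 n ^ 2 := by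
      rw [FTb, ← pow_add, Nat.sub_add_cancel hin]
    refine Commute.symm ?_
    rw [Commute, SemiconjBy, hFTb, ← mul_assoc, σ_mul_Xb_pow le_rfl (by omega),
      show 1 + (n - 2) = n - 1 by omega, mul_assoc, σ_mul_Xb_sq hin, ← mul_assoc]
  | succ i hi ih =>
    have hXb : Commute (FTb n) (Xb n 1 n) := (Commute.refl _).pow_left n
    rw [← conj_inv_Xb_σ hi (by omega), MulAut.conj_apply, inv_inv]
    exact (hXb.inv_right.mul_right (ih (by omega))).mul_right hXb

theorem commute_FTb (g : BraidGroup n) : Commute (FTb n) g := by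
  refine (Subgroup.mem_centralizer_singleton_iff.mp (PresentedGroup.generated_by
    (braidRelsSet (n - 1)) (Subgroup.centralizer {FTb n}) (fun j => ?_) g)).symm
  refine Subgroup.mem_centralizer_singleton_iff.mpr ?_
  rw [← σ_succ_val]
  exact (commute_FTb_σ (by omega) (by omega)).symm.eq

end FullTwist

lemma map_FTb_pred {n : ℕ} (hn : 1 ≤ n) (sh : BraidGroup (n - 1) →* BraidGroup n)
    (hsh : ∀ j, 1 ≤ j → j ≤ n - 2 → sh (σ (n - 1) j) = σ n (j + 1)) :
    sh (FTb (n - 1)) = Xb n 2 n ^ (n - 1) := by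
  rw [FTb, map_pow, map_Xb (a := 1) (b := n - 1) sh 1 fun j hj hjn => hsh j hj (by omega),
    Nat.sub_add_cancel hn]

end BraidGroup

theorem stmt15_general (n : ℕ)
    (sh : BraidGroup (n - 1) →* BraidGroup n)
    (hsh : ∀ j, 1 ≤ j → j ≤ n - 2 → sh (σ (n - 1) j) = σ n (j + 1))
    (i m : ℕ) (hi1 : 1 ≤ i) (hi2 : i ≤ n - 1) (hm : 1 ≤ m) :
    Xb n 1 (n - i) * sh (FTb (n - 1)) * FTb n ^ (m - 1) * Yb n 1 (n - i) =
      (Xb n (n - i) n)⁻¹ * (Yb n (n - i) n)⁻¹ * FTb n ^ m := by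
  set k := n - i
  have hk : 1 ≤ k := by omega
  have hkn : k ≤ n := Nat.sub_le n i
  set u := Xb n 2 n ^ (n - 1) * Yb n 1 k
  have hFT : FTb n = u * (Yb n k n * Xb n k n * Xb n 1 k) := by
    rw [BraidGroup.FTb_eq_Xb_two_pow_mul (by omega), ← BraidGroup.Yb_mul_Yb hk hkn,
      ← BraidGroup.Xb_mul_Xb hk hkn]
    simp only [u, mul_assoc]
  have hrot : Yb n k n * Xb n k n * (Xb n 1 k * Xb n 2 n ^ (n - 1) * Yb n 1 k) = FTb n := by
    calc _ = u⁻¹ * FTb n * u := by rw [hFT]; simp only [u]; group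
      _ = FTb n := by rw [mul_assoc, (BraidGroup.commute_FTb u).eq, inv_mul_cancel_left]
  calc Xb n 1 k * sh (FTb (n - 1)) * FTb n ^ (m - 1) * Yb n 1 k
      = Xb n 1 k * Xb n 2 n ^ (n - 1) * Yb n 1 k * FTb n ^ (m - 1) := by
        rw [BraidGroup.map_FTb_pred (by omega) sh hsh, mul_assoc _ (FTb n ^ (m - 1)),
          ((BraidGroup.commute_FTb _).pow_left _).eq, ← mul_assoc]
    _ = (Yb n k n * Xb n k n)⁻¹ * FTb n * FTb n ^ (m - 1) := by rw [← hrot]; group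
    _ = (Xb n k n)⁻¹ * (Yb n k n)⁻¹ * FTb n ^ m := by
        rw [mul_assoc, ← pow_succ', Nat.sub_add_cancel hm, mul_inv_rev]

/-- In `Br_n` (`n ≥ 2`), for every `1 ≤ i ≤ n-1` and `m ≥ 1`:
`X_{[1,n-i]}·sh(FT_{n-1})·FT_n^{m-1}·Y_{[1,n-i]}
  = X_{[n-i,n]}⁻¹·Y_{[n-i,n]}⁻¹·FT_n^m`,
where `sh : Br_{n-1} → Br_n` is the homomorphism sending `σ_j` to `σ_{j+1}`. -/
theorem stmt15 (n : ℕ) (hn : 2 ≤ n)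
    (sh : BraidGroup (n - 1) →* BraidGroup n)
    (hsh : ∀ j, 1 ≤ j → j ≤ n - 2 → sh (σ (n - 1) j) = σ n (j + 1))
    (i m : ℕ) (hi1 : 1 ≤ i) (hi2 : i ≤ n - 1) (hm : 1 ≤ m) :
    Xb n 1 (n - i) * sh (FTb (n - 1)) * FTb n ^ (m - 1) * Yb n 1 (n - i) =
      (Xb n (n - i) n)⁻¹ * (Yb n (n - i) n)⁻¹ * FTb n ^ m :=
  stmt15_general n sh hsh i m hi1 hi2 hm
end
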